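/- Let n₃ be the Heisenberg Lie algebra on ℂ³ ([f2,f3] = f1). Then the second Chevalley–Eilenberg cohomology H²(n₃; n₃) with adjoint coefficients has dimension 5, and the third cohomology H³(n₃; n₃) has dimension 2. -/

import Mathlib

abbrev V : Type := Fin 3 → ℂ

/-- The Heisenberg algebra `n₃` on `ℂ³`: `[f2,f3] = f1`, other brackets zero. -/
def br (u v : V) : V := fun k => if k = 0 then u 1 * v 2 - u 2 * v 1 else 0

/-- Linearity of a map `V → V`. -/
def IsLin (ρ : V → V) : Prop :=
  (∀ u v, ρ (u + v) = ρ u + ρ v) ∧ ∀ (s : ℂ) u, ρ (s • u) = s • ρ u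

/-- Bilinearity of a 2-cochain. -/
def IsBil (ψ : V → V → V) : Prop :=
  (∀ a b c, ψ (a + b) c = ψ a c + ψ b c) ∧ (∀ (s : ℂ) a b, ψ (s • a) b = s • ψ a b) ∧
  (∀ a b c, ψ a (b + c) = ψ a b + ψ a c) ∧ (∀ (s : ℂ) a b, ψ a (s • b) = s • ψ a b)

/-- Alternating property of a 2-cochain. -/
def IsAlt2 (ψ : V → V → V) : Prop := ∀ a, ψ a a = 0

/-- Trilinearity of a 3-cochain. -/
def IsTril (τ : V → V → V → V) : Prop :=
  (∀ a, IsBil (τ a)) ∧ (∀ b c, IsLin fun a => τ a b c)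

/-- Alternating property of a 3-cochain. -/
def IsAlt3 (τ : V → V → V → V) : Prop :=
  (∀ a b, τ a a b = 0) ∧ (∀ a b, τ a b b = 0) ∧ (∀ a b, τ a b a = 0)

/-- The Chevalley–Eilenberg differential on 1-cochains. -/
def D1 (φ : V → V) : V → V → V :=
  fun u v => br (φ u) v + br u (φ v) - φ (br u v)

/-- The Chevalley–Eilenberg differential on 2-cochains. -/
def D2 (ψ : V → V → V) : V → V → V → V :=
  fun a b c => br (ψ a b) c - br (ψ a c) b + br (ψ b c) a
    - ψ (br a b) c + ψ (br a c) b - ψ (br b c) a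

/-- The Chevalley–Eilenberg differential on 3-cochains. -/
def D3 (τ : V → V → V → V) : V → V → V → V → V :=
  fun a b c e => br a (τ b c e) - br b (τ a c e) + br c (τ a b e) - br e (τ a b c)
    - τ (br a b) c e + τ (br a c) b e - τ (br a e) b c
    - τ (br b c) a e + τ (br b e) a c - τ (br c e) a b

/-- 2-cocycles of `n₃` with adjoint coefficients. -/
noncomputable def Z2 : Submodule ℂ (V → V → V) :=
  Submodule.span ℂ {ψ | IsBil ψ ∧ IsAlt2 ψ ∧ D2 ψ = 0}

/-- 2-coboundaries of `n₃` with adjoint coefficients. -/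
noncomputable def B2 : Submodule ℂ (V → V → V) :=
  Submodule.span ℂ {ψ | ∃ φ : V → V, IsLin φ ∧ ψ = D1 φ}

/-- 3-cocycles of `n₃` with adjoint coefficients. -/
noncomputable def Z3 : Submodule ℂ (V → V → V → V) :=
  Submodule.span ℂ {τ | IsTril τ ∧ IsAlt3 τ ∧ D3 τ = 0}

/-- 3-coboundaries of `n₃` with adjoint coefficients. -/
noncomputable def B3 : Submodule ℂ (V → V → V → V) :=
  Submodule.span ℂ {τ | ∃ ψ : V → V → V, IsBil ψ ∧ IsAlt2 ψ ∧ τ = D2 ψ}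

namespace N3aux

def e (i : Fin 3) : V := fun j => if j = i then 1 else 0

def det3 (a b c : V) : ℂ :=
  a 0*(b 1*c 2 - b 2*c 1) - a 1*(b 0*c 2 - b 2*c 0) + a 2*(b 0*c 1 - b 1*c 0)

def T (k : Fin 3) : V → V → V → V := fun a b c j => if j = k then det3 a b c else 0

def g1 : V → V → V := fun u v j =>
  if j = 1 then u 0 * v 1 - u 1 * v 0 else if j = 2 then -(u 0 * v 2 - u 2 * v 0) else 0
def g2 : V → V → V := fun u v j => if j = 2 then u 0 * v 1 - u 1 * v 0 else 0
def g3 : V → V → V := fun u v j => if j = 1 then u 0 * v 2 - u 2 * v 0 else 0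
def g4 : V → V → V := fun u v j => if j = 1 then u 1 * v 2 - u 2 * v 1 else 0
def g5 : V → V → V := fun u v j => if j = 2 then u 1 * v 2 - u 2 * v 1 else 0
def g0 : V → V → V := fun u v j => if j = 1 then u 0 * v 1 - u 1 * v 0 else 0

/- basic bracket values -/
lemma br_e01 : br (e 0) (e 1) = 0 := by funext k; simp [br, e]
lemma br_e02 : br (e 0) (e 2) = 0 := by funext k; simp [br, e]
lemma br_e12 : br (e 1) (e 2) = e 0 := by
  funext k; by_cases h : k = 0 <;> simp [br, e, h]

lemma expand (u : V) : u = u 0 • e 0 + u 1 • e 1 + u 2 • e 2 := by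
  funext j; fin_cases j <;> simp [e]

lemma lin_ext {ρ : V → V} (h : IsLin ρ) (u : V) :
    ρ u = u 0 • ρ (e 0) + u 1 • ρ (e 1) + u 2 • ρ (e 2) := by
  conv_lhs => rw [expand u]
  rw [h.1, h.1, h.2, h.2, h.2]

lemma lin_zero {ρ : V → V} (h : IsLin ρ) : ρ 0 = 0 := by
  have := h.2 0 0; simpa using this

lemma bil_zero_left {ψ : V → V → V} (hb : IsBil ψ) (x : V) : ψ 0 x = 0 := by
  have := hb.2.1 0 0 x; simpa using this

lemma anti2 {ψ : V → V → V} (hb : IsBil ψ) (ha : IsAlt2 ψ) (u v : V) :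
    ψ v u = -ψ u v := by
  have h := ha (u + v)
  rw [hb.1, hb.2.2.1, hb.2.2.1, ha, ha] at h
  rw [eq_neg_iff_add_eq_zero]
  linear_combination (norm := abel) h

lemma bil_ext {ψ : V → V → V} (hb : IsBil ψ) (ha : IsAlt2 ψ) (u v : V) :
    ψ u v = (u 0 * v 1 - u 1 * v 0) • ψ (e 0) (e 1)
      + (u 0 * v 2 - u 2 * v 0) • ψ (e 0) (e 2)
      + (u 1 * v 2 - u 2 * v 1) • ψ (e 1) (e 2) := by
  obtain ⟨h1, h2, h3, h4⟩ := hb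
  conv_lhs => rw [expand u, expand v]
  simp only [h1, h3, h2, h4]
  rw [ha (e 0), ha (e 1), ha (e 2),
    anti2 ⟨h1,h2,h3,h4⟩ ha (e 0) (e 1), anti2 ⟨h1,h2,h3,h4⟩ ha (e 0) (e 2),
    anti2 ⟨h1,h2,h3,h4⟩ ha (e 1) (e 2)]
  module

lemma tril_ext {τ : V → V → V → V} (ht : IsTril τ) (ha : IsAlt3 τ) (a b c : V) :
    τ a b c = det3 a b c • τ (e 0) (e 1) (e 2) := by
  have halt2 : ∀ x, IsAlt2 (τ x) := fun x y => ha.2.1 x y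
  have hlin : ∀ p q : V, IsLin fun x => τ x p q := fun p q => ht.2 p q
  have anti12 : ∀ x y z, τ y x z = -τ x y z := by
    intro x y z
    have e1 : τ (x + y) (x + y) z = τ x (x + y) z + τ y (x + y) z := (hlin (x+y) z).1 x y
    rw [(ht.1 x).1, (ht.1 y).1, ha.1 x z, ha.1 y z, ha.1 (x + y) z] at e1
    rw [eq_neg_iff_add_eq_zero]
    linear_combination (norm := abel) e1.symm
  have anti23 : ∀ x y z, τ x z y = -τ x y z := fun x y z => anti2 (ht.1 x) (halt2 x) y z
  have key := bil_ext (ht.1 a) (halt2 a) b c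
  rw [lin_ext (hlin (e 0) (e 1)) a, lin_ext (hlin (e 0) (e 2)) a,
      lin_ext (hlin (e 1) (e 2)) a] at key
  rw [ha.1 (e 0) (e 1), ha.2.2 (e 1) (e 0), ha.1 (e 0) (e 2), ha.2.2 (e 2) (e 0),
      ha.1 (e 1) (e 2), ha.2.2 (e 2) (e 1)] at key
  rw [show τ (e 2) (e 0) (e 1) = τ (e 0) (e 1) (e 2) by rw [anti12, anti23]; ring,
      show τ (e 1) (e 0) (e 2) = -τ (e 0) (e 1) (e 2) from anti12 _ _ _] at key
  rw [key]; unfold det3; module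

/- membership facts for the explicit generators -/
lemma g1_bil : IsBil g1 := by
  refine ⟨?_, ?_, ?_, ?_⟩ <;> intros <;> funext j <;> fin_cases j <;>
    simp [g1, Pi.add_apply, Pi.smul_apply, smul_eq_mul] <;> ring
lemma g2_bil : IsBil g2 := by
  refine ⟨?_, ?_, ?_, ?_⟩ <;> intros <;> funext j <;> fin_cases j <;>
    simp [g2, Pi.add_apply, Pi.smul_apply, smul_eq_mul] <;> ring
lemma g3_bil : IsBil g3 := by
  refine ⟨?_, ?_, ?_, ?_⟩ <;> intros <;> funext j <;> fin_cases j <;>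
    simp [g3, Pi.add_apply, Pi.smul_apply, smul_eq_mul] <;> ring
lemma g4_bil : IsBil g4 := by
  refine ⟨?_, ?_, ?_, ?_⟩ <;> intros <;> funext j <;> fin_cases j <;>
    simp [g4, Pi.add_apply, Pi.smul_apply, smul_eq_mul] <;> ring
lemma g5_bil : IsBil g5 := by
  refine ⟨?_, ?_, ?_, ?_⟩ <;> intros <;> funext j <;> fin_cases j <;>
    simp [g5, Pi.add_apply, Pi.smul_apply, smul_eq_mul] <;> ring
lemma g0_bil : IsBil g0 := by
  refine ⟨?_, ?_, ?_, ?_⟩ <;> intros <;> funext j <;> fin_cases j <;>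
    simp [g0, Pi.add_apply, Pi.smul_apply, smul_eq_mul] <;> ring

lemma g1_alt : IsAlt2 g1 := by intro a; funext j; fin_cases j <;> simp [g1] <;> ring
lemma g2_alt : IsAlt2 g2 := by intro a; funext j; fin_cases j <;> simp [g2] <;> ring
lemma g3_alt : IsAlt2 g3 := by intro a; funext j; fin_cases j <;> simp [g3] <;> ring
lemma g4_alt : IsAlt2 g4 := by intro a; funext j; fin_cases j <;> simp [g4] <;> ring
lemma g5_alt : IsAlt2 g5 := by intro a; funext j; fin_cases j <;> simp [g5] <;> ring
lemma g0_alt : IsAlt2 g0 := by intro a; funext j; fin_cases j <;> simp [g0] <;> ring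

lemma g1_cocycle : D2 g1 = 0 := by
  funext a b c j; fin_cases j <;> simp [D2, g1, br] <;> ring
lemma g2_cocycle : D2 g2 = 0 := by
  funext a b c j; fin_cases j <;> simp [D2, g2, br] <;> ring
lemma g3_cocycle : D2 g3 = 0 := by
  funext a b c j; fin_cases j <;> simp [D2, g3, br] <;> ring
lemma g4_cocycle : D2 g4 = 0 := by
  funext a b c j; fin_cases j <;> simp [D2, g4, br] <;> ring
lemma g5_cocycle : D2 g5 = 0 := by
  funext a b c j; fin_cases j <;> simp [D2, g5, br] <;> ring

lemma D2_g0 : D2 g0 = T 0 := by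
  funext a b c j; fin_cases j <;> simp [D2, g0, T, br, det3] <;> ring

lemma g1_mem : g1 ∈ Z2 := Submodule.subset_span ⟨g1_bil, g1_alt, g1_cocycle⟩
lemma g2_mem : g2 ∈ Z2 := Submodule.subset_span ⟨g2_bil, g2_alt, g2_cocycle⟩
lemma g3_mem : g3 ∈ Z2 := Submodule.subset_span ⟨g3_bil, g3_alt, g3_cocycle⟩
lemma g4_mem : g4 ∈ Z2 := Submodule.subset_span ⟨g4_bil, g4_alt, g4_cocycle⟩
lemma g5_mem : g5 ∈ Z2 := Submodule.subset_span ⟨g5_bil, g5_alt, g5_cocycle⟩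

lemma T1_tril : IsTril (T 1) := by
  refine ⟨fun a => ⟨?_, ?_, ?_, ?_⟩, fun b c => ⟨?_, ?_⟩⟩ <;> intros <;> funext j <;>
    fin_cases j <;> simp [T, det3, Pi.add_apply, Pi.smul_apply, smul_eq_mul] <;> ring
lemma T2_tril : IsTril (T 2) := by
  refine ⟨fun a => ⟨?_, ?_, ?_, ?_⟩, fun b c => ⟨?_, ?_⟩⟩ <;> intros <;> funext j <;>
    fin_cases j <;> simp [T, det3, Pi.add_apply, Pi.smul_apply, smul_eq_mul] <;> ring
lemma T1_alt : IsAlt3 (T 1) := by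
  refine ⟨?_, ?_, ?_⟩ <;> intros <;> funext j <;> fin_cases j <;> simp [T, det3] <;> ring
lemma T2_alt : IsAlt3 (T 2) := by
  refine ⟨?_, ?_, ?_⟩ <;> intros <;> funext j <;> fin_cases j <;> simp [T, det3] <;> ring
lemma T1_cocycle : D3 (T 1) = 0 := by
  funext a b c d j; fin_cases j <;> simp [D3, T, br, det3] <;> ring
lemma T2_cocycle : D3 (T 2) = 0 := by
  funext a b c d j; fin_cases j <;> simp [D3, T, br, det3] <;> ring

lemma T1_mem : T 1 ∈ Z3 := Submodule.subset_span ⟨T1_tril, T1_alt, T1_cocycle⟩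
lemma T2_mem : T 2 ∈ Z3 := Submodule.subset_span ⟨T2_tril, T2_alt, T2_cocycle⟩




/- closure lemmas -/
lemma IsLin_add {ρ σ : V → V} (h1 : IsLin ρ) (h2 : IsLin σ) : IsLin (ρ + σ) :=
  ⟨fun u v => by simp only [Pi.add_apply, h1.1, h2.1]; abel,
   fun s u => by simp only [Pi.add_apply, h1.2, h2.2, smul_add]⟩

lemma IsLin_smul {ρ : V → V} (c : ℂ) (h : IsLin ρ) : IsLin (c • ρ) :=
  ⟨fun u v => by simp only [Pi.smul_apply, h.1, smul_add],
   fun s u => by simp only [Pi.smul_apply, h.2]; rw [smul_comm]⟩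

lemma IsBil_add {ψ χ : V → V → V} (h1 : IsBil ψ) (h2 : IsBil χ) : IsBil (ψ + χ) :=
  ⟨fun a b c => by simp only [Pi.add_apply, h1.1, h2.1]; abel,
   fun s a b => by simp only [Pi.add_apply, h1.2.1, h2.2.1, smul_add],
   fun a b c => by simp only [Pi.add_apply, h1.2.2.1, h2.2.2.1]; abel,
   fun s a b => by simp only [Pi.add_apply, h1.2.2.2, h2.2.2.2, smul_add]⟩

lemma IsBil_smul {ψ : V → V → V} (c : ℂ) (h : IsBil ψ) : IsBil (c • ψ) :=
  ⟨fun a b c' => by simp only [Pi.smul_apply, h.1, smul_add],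
   fun s a b => by simp only [Pi.smul_apply, h.2.1]; rw [smul_comm],
   fun a b c' => by simp only [Pi.smul_apply, h.2.2.1, smul_add],
   fun s a b => by simp only [Pi.smul_apply, h.2.2.2]; rw [smul_comm]⟩

lemma IsBil_zero : IsBil (0 : V → V → V) := by
  refine ⟨?_, ?_, ?_, ?_⟩ <;> intros <;> simp

lemma IsAlt2_add {ψ χ : V → V → V} (h1 : IsAlt2 ψ) (h2 : IsAlt2 χ) : IsAlt2 (ψ + χ) :=
  fun a => by simp only [Pi.add_apply, h1 a, h2 a, add_zero]

lemma IsAlt2_smul {ψ : V → V → V} (c : ℂ) (h : IsAlt2 ψ) : IsAlt2 (c • ψ) :=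
  fun a => by simp only [Pi.smul_apply, h a, smul_zero]

lemma IsTril_add {τ σ : V → V → V → V} (h1 : IsTril τ) (h2 : IsTril σ) : IsTril (τ + σ) :=
  ⟨fun a => IsBil_add (h1.1 a) (h2.1 a),
   fun b c => IsLin_add (h1.2 b c) (h2.2 b c)⟩

lemma IsTril_smul {τ : V → V → V → V} (c : ℂ) (h : IsTril τ) : IsTril (c • τ) :=
  ⟨fun a => IsBil_smul c (h.1 a), fun b c' => IsLin_smul c (h.2 b c')⟩

lemma IsAlt3_add {τ σ : V → V → V → V} (h1 : IsAlt3 τ) (h2 : IsAlt3 σ) : IsAlt3 (τ + σ) :=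
  ⟨fun a b => by simp only [Pi.add_apply, h1.1 a b, h2.1 a b, add_zero],
   fun a b => by simp only [Pi.add_apply, h1.2.1 a b, h2.2.1 a b, add_zero],
   fun a b => by simp only [Pi.add_apply, h1.2.2 a b, h2.2.2 a b, add_zero]⟩

lemma IsAlt3_smul {τ : V → V → V → V} (c : ℂ) (h : IsAlt3 τ) : IsAlt3 (c • τ) :=
  ⟨fun a b => by simp only [Pi.smul_apply, h.1 a b, smul_zero],
   fun a b => by simp only [Pi.smul_apply, h.2.1 a b, smul_zero],
   fun a b => by simp only [Pi.smul_apply, h.2.2 a b, smul_zero]⟩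

/- the constraint satisfied by 2-cocycles -/
lemma cocycle_constraint {ψ : V → V → V} (hb : IsBil ψ) (ha : IsAlt2 ψ)
    (hd : D2 ψ = 0) : ψ (e 0) (e 1) 1 + ψ (e 0) (e 2) 2 = 0 := by
  have h := congrFun (congrFun (congrFun (congrFun hd (e 0)) (e 1)) (e 2)) 0
  rw [show (D2 ψ) (e 0) (e 1) (e 2) = br (ψ (e 0) (e 1)) (e 2) - br (ψ (e 0) (e 2)) (e 1)
      + br (ψ (e 1) (e 2)) (e 0) - ψ (br (e 0) (e 1)) (e 2) + ψ (br (e 0) (e 2)) (e 1)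
      - ψ (br (e 1) (e 2)) (e 0) from rfl, br_e01, br_e02, br_e12,
    ha (e 0)] at h
  simp [Pi.sub_apply, Pi.add_apply, Pi.zero_apply, br, e, bil_zero_left hb] at h
  linear_combination h

noncomputable def M2 : Submodule ℂ (V → V → V) where
  carrier := {ψ | IsBil ψ ∧ IsAlt2 ψ ∧ ψ (e 0) (e 1) 1 + ψ (e 0) (e 2) 2 = 0}
  add_mem' := by
    rintro ψ χ ⟨hb1, ha1, hc1⟩ ⟨hb2, ha2, hc2⟩
    refine ⟨IsBil_add hb1 hb2, IsAlt2_add ha1 ha2, ?_⟩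
    simp only [Pi.add_apply]
    linear_combination hc1 + hc2
  zero_mem' := by
    refine ⟨IsBil_zero, fun a => rfl, by simp⟩
  smul_mem' := by
    rintro c ψ ⟨hb, ha, hc⟩
    refine ⟨IsBil_smul c hb, IsAlt2_smul c ha, ?_⟩
    simp only [Pi.smul_apply, smul_eq_mul]
    linear_combination c * hc

lemma Z2_le_M2 : Z2 ≤ M2 :=
  Submodule.span_le.2 fun ψ h => ⟨h.1, h.2.1, cocycle_constraint h.1 h.2.1 h.2.2⟩

noncomputable def M3 : Submodule ℂ (V → V → V → V) where
  carrier := {τ | IsTril τ ∧ IsAlt3 τ}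
  add_mem' := fun h1 h2 => ⟨IsTril_add h1.1 h2.1, IsAlt3_add h1.2 h2.2⟩
  zero_mem' := by
    constructor
    · exact ⟨fun a => IsBil_zero, fun b c => ⟨fun u v => by simp, fun s u => by simp⟩⟩
    · exact ⟨fun a b => rfl, fun a b => rfl, fun a b => rfl⟩
  smul_mem' := fun c τ h => ⟨IsTril_smul c h.1, IsAlt3_smul c h.2⟩

lemma Z3_le_M3 : Z3 ≤ M3 := Submodule.span_le.2 fun τ h => ⟨h.1, h.2.1⟩

/- the linear functionals -/
noncomputable def F : (V → V → V) →ₗ[ℂ] (Fin 5 → ℂ) where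
  toFun ψ := ![ψ (e 0) (e 1) 1, ψ (e 0) (e 1) 2, ψ (e 0) (e 2) 1,
               ψ (e 1) (e 2) 1 + ψ (e 0) (e 2) 0, ψ (e 1) (e 2) 2 - ψ (e 0) (e 1) 0]
  map_add' ψ χ := by
    funext i; fin_cases i <;> simp [Pi.add_apply] <;> ring
  map_smul' s ψ := by
    funext i; fin_cases i <;> simp [Pi.smul_apply, smul_eq_mul] <;> ring

noncomputable def F3 : (V → V → V → V) →ₗ[ℂ] (Fin 2 → ℂ) where
  toFun τ := ![τ (e 0) (e 1) (e 2) 1, τ (e 0) (e 1) (e 2) 2]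
  map_add' τ σ := by funext i; fin_cases i <;> simp [Pi.add_apply]
  map_smul' s τ := by funext i; fin_cases i <;> simp [Pi.smul_apply]




lemma FD1 {φ : V → V} (hφ : IsLin φ) : F (D1 φ) = 0 := by
  have h01 : D1 φ (e 0) (e 1) = br (φ (e 0)) (e 1) + br (e 0) (φ (e 1)) := by
    show br (φ (e 0)) (e 1) + br (e 0) (φ (e 1)) - φ (br (e 0) (e 1)) = _
    rw [br_e01, lin_zero hφ, sub_zero]
  have h02 : D1 φ (e 0) (e 2) = br (φ (e 0)) (e 2) + br (e 0) (φ (e 2)) := by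
    show br (φ (e 0)) (e 2) + br (e 0) (φ (e 2)) - φ (br (e 0) (e 2)) = _
    rw [br_e02, lin_zero hφ, sub_zero]
  have h12 : D1 φ (e 1) (e 2) = br (φ (e 1)) (e 2) + br (e 1) (φ (e 2)) - φ (e 0) := by
    show br (φ (e 1)) (e 2) + br (e 1) (φ (e 2)) - φ (br (e 1) (e 2)) = _
    rw [br_e12]
  funext i
  fin_cases i <;>
    simp [F, h01, h02, h12, br, e, Pi.add_apply, Pi.sub_apply] <;> ring

lemma B2_le_kerF : B2 ≤ LinearMap.ker F :=
  Submodule.span_le.2 (by rintro ψ ⟨φ, hφ, rfl⟩; exact LinearMap.mem_ker.2 (FD1 hφ))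

lemma F3D2 {ψ : V → V → V} (hb : IsBil ψ) (ha : IsAlt2 ψ) : F3 (D2 ψ) = 0 := by
  have h : D2 ψ (e 0) (e 1) (e 2) = br (ψ (e 0) (e 1)) (e 2) - br (ψ (e 0) (e 2)) (e 1)
      + br (ψ (e 1) (e 2)) (e 0) := by
    show br (ψ (e 0) (e 1)) (e 2) - br (ψ (e 0) (e 2)) (e 1) + br (ψ (e 1) (e 2)) (e 0)
      - ψ (br (e 0) (e 1)) (e 2) + ψ (br (e 0) (e 2)) (e 1) - ψ (br (e 1) (e 2)) (e 0) = _
    rw [br_e01, br_e02, br_e12, bil_zero_left hb, bil_zero_left hb, ha (e 0)]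
    abel
  funext i
  fin_cases i <;> simp [F3, h, br, e, Pi.add_apply, Pi.sub_apply]

lemma B3_le_kerF3 : B3 ≤ LinearMap.ker F3 :=
  Submodule.span_le.2 (by rintro τ ⟨ψ, hb, ha, rfl⟩; exact LinearMap.mem_ker.2 (F3D2 hb ha))

lemma ker_eq2 : LinearMap.ker (F ∘ₗ Z2.subtype) = Submodule.comap Z2.subtype B2 := by
  ext ⟨ψ, hψ⟩
  simp only [LinearMap.mem_ker, Submodule.mem_comap, LinearMap.coe_comp, Function.comp_apply,
    Submodule.coe_subtype]
  constructor
  · intro hF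
    obtain ⟨hb, ha, hcon⟩ := Z2_le_M2 hψ
    have c0 : ψ (e 0) (e 1) 1 = 0 := by have := congrFun hF 0; simpa [F] using this
    have c1 : ψ (e 0) (e 1) 2 = 0 := by have := congrFun hF 1; simpa [F] using this
    have c2 : ψ (e 0) (e 2) 1 = 0 := by have := congrFun hF 2; simpa [F] using this
    have c3 : ψ (e 1) (e 2) 1 + ψ (e 0) (e 2) 0 = 0 := by have := congrFun hF 3; simpa [F] using this
    have c4 : ψ (e 1) (e 2) 2 - ψ (e 0) (e 1) 0 = 0 := by have := congrFun hF 4; simpa [F] using this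
    have c5 : ψ (e 0) (e 2) 2 = 0 := by linear_combination hcon - c0
    refine Submodule.subset_span ⟨fun u j => if j = 0 then 0 else if j = 1 then
        ψ (e 0) (e 2) 0 * u 0 + ψ (e 1) (e 2) 0 * u 1 else -(ψ (e 0) (e 1) 0) * u 0,
      ⟨?_, ?_⟩, ?_⟩
    · intro u v; funext j; fin_cases j <;> simp [Pi.add_apply] <;> ring
    · intro s u; funext j; fin_cases j <;> simp [Pi.smul_apply, smul_eq_mul] <;> ring
    · funext u v
      rw [bil_ext hb ha u v]
      funext j
      fin_cases j
      · simp [D1, br, e, Pi.add_apply, Pi.sub_apply, Pi.smul_apply, smul_eq_mul]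
        ring
      · simp [D1, br, e, Pi.add_apply, Pi.sub_apply, Pi.smul_apply, smul_eq_mul, c0, c2]
        linear_combination (u 1 * v 2 - u 2 * v 1) * c3
      · simp [D1, br, e, Pi.add_apply, Pi.sub_apply, Pi.smul_apply, smul_eq_mul, c1, c5]
        linear_combination (u 1 * v 2 - u 2 * v 1) * c4
  · intro hmem
    exact LinearMap.mem_ker.1 (B2_le_kerF hmem)

lemma surj2 : Function.Surjective (F ∘ₗ Z2.subtype) := by
  intro x
  refine ⟨⟨x 0 • g1 + x 1 • g2 + x 2 • g3 + x 3 • g4 + x 4 • g5, ?_⟩, ?_⟩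
  · exact add_mem (add_mem (add_mem (add_mem (Submodule.smul_mem _ _ g1_mem)
      (Submodule.smul_mem _ _ g2_mem)) (Submodule.smul_mem _ _ g3_mem))
      (Submodule.smul_mem _ _ g4_mem)) (Submodule.smul_mem _ _ g5_mem)
  · funext i
    fin_cases i <;>
      simp [F, g1, g2, g3, g4, g5, e, Pi.add_apply, Pi.smul_apply, smul_eq_mul]

lemma ker_eq3 : LinearMap.ker (F3 ∘ₗ Z3.subtype) = Submodule.comap Z3.subtype B3 := by
  ext ⟨τ, hτ⟩
  simp only [LinearMap.mem_ker, Submodule.mem_comap, LinearMap.coe_comp, Function.comp_apply,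
    Submodule.coe_subtype]
  constructor
  · intro hF
    obtain ⟨ht, ha⟩ := Z3_le_M3 hτ
    have w1 : τ (e 0) (e 1) (e 2) 1 = 0 := by have := congrFun hF 0; simpa [F3] using this
    have w2 : τ (e 0) (e 1) (e 2) 2 = 0 := by have := congrFun hF 1; simpa [F3] using this
    have key : τ = τ (e 0) (e 1) (e 2) 0 • D2 g0 := by
      rw [D2_g0]
      funext a b c
      rw [tril_ext ht ha a b c]
      funext j
      fin_cases j <;> simp [T, w1, w2, Pi.smul_apply, smul_eq_mul] <;> ring
    rw [key]
    exact Submodule.smul_mem _ _ (Submodule.subset_span ⟨g0, g0_bil, g0_alt, rfl⟩)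
  · intro hmem
    exact LinearMap.mem_ker.1 (B3_le_kerF3 hmem)

lemma surj3 : Function.Surjective (F3 ∘ₗ Z3.subtype) := by
  intro x
  refine ⟨⟨x 0 • T 1 + x 1 • T 2, add_mem (Submodule.smul_mem _ _ T1_mem)
    (Submodule.smul_mem _ _ T2_mem)⟩, ?_⟩
  funext i
  fin_cases i <;>
    simp [F3, T, det3, e, Pi.add_apply, Pi.smul_apply, smul_eq_mul]


end N3aux

/-- `H²(n₃;n₃)` has dimension 5 and `H³(n₃;n₃)` has dimension 2. -/
theorem h2_h3_n3 :
    Module.finrank ℂ (↥Z2 ⧸ Submodule.comap Z2.subtype B2) = 5 ∧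
    Module.finrank ℂ (↥Z3 ⧸ Submodule.comap Z3.subtype B3) = 2 := by
  constructor
  · have eqv := (Submodule.quotEquivOfEq _ _ N3aux.ker_eq2.symm).trans
      ((N3aux.F ∘ₗ Z2.subtype).quotKerEquivOfSurjective N3aux.surj2)
    rw [eqv.finrank_eq]
    simp [Module.finrank_fintype_fun_eq_card]
  · have eqv := (Submodule.quotEquivOfEq _ _ N3aux.ker_eq3.symm).trans
      ((N3aux.F3 ∘ₗ Z3.subtype).quotKerEquivOfSurjective N3aux.surj3)
    rw [eqv.finrank_eq]
    simp [Module.finrank_fintype_fun_eq_card]
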